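/- Let p be a bijection from {1,…,m−1} to {2,…,m} such that the sequence i ↦ λ₃(b_1, a_{p(i)}) is nondecreasing in i. Fix k with 1 < k < m and define f(i) = λ₃(b_k, a_{p(i)}) if p(i) ≥ k+1 (the valid entries), and f(i) = λ₃(b_k, a_{k+1}) + λ₃(b_1, a_{p(i)}) − λ₃(b_1, a_{k+1}) otherwise (the assigned values for undefined entries). Then f is nondecreasing in i. -/
import Mathlib


/-- `λ₃(i, j) = (x j − x i − 2r(j − i))/2`. -/
noncomputable def lam3 (r : ℝ) (x : ℕ → ℝ) (i j : ℕ) : ℝ :=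
  (x j - x i - 2 * r * ((j : ℝ) - (i : ℝ))) / 2

/-- Let `p` be a bijection from `{1, …, m−1}` onto `{2, …, m}` such that
`i ↦ λ₃(b 1, a (p i))` is nondecreasing. Fix `1 < k < m` and define
`f i = λ₃(b k, a (p i))` when `p i ≥ k+1` (valid entries), and
`f i = λ₃(b k, a (k+1)) + λ₃(b 1, a (p i)) − λ₃(b 1, a (k+1))` otherwise
(assigned values for undefined entries). Then `f` is nondecreasing. -/
theorem stmt11 (N m : ℕ) (hm : 3 ≤ m) (r : ℝ) (hr : 0 < r) (x : ℕ → ℝ) (a b : ℕ → ℕ)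
    (hrange : ∀ k, 1 ≤ k → k ≤ m → 1 ≤ a k ∧ b k ≤ N)
    (hab : ∀ k, 1 ≤ k → k ≤ m → a k ≤ b k)
    (hsep : ∀ k, 1 ≤ k → k ≤ m - 1 → b k < a (k + 1))
    (p : ℕ → ℕ) (hp : Set.BijOn p (Set.Icc 1 (m - 1)) (Set.Icc 2 m))
    (hmono : ∀ i j, 1 ≤ i → i ≤ j → j ≤ m - 1 →
      lam3 r x (b 1) (a (p i)) ≤ lam3 r x (b 1) (a (p j)))
    (k : ℕ) (hk1 : 1 < k) (hk2 : k < m)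
    (f : ℕ → ℝ)
    (hf : ∀ i, 1 ≤ i → i ≤ m - 1 →
      f i = if k + 1 ≤ p i then lam3 r x (b k) (a (p i))
            else lam3 r x (b k) (a (k + 1)) + lam3 r x (b 1) (a (p i)) -
                   lam3 r x (b 1) (a (k + 1))) :
    ∀ i j, 1 ≤ i → i ≤ j → j ≤ m - 1 → f i ≤ f j := by
  intro i j hi hij hj
  have h := hmono i j hi hij hj
  rw [hf i hi (hij.trans hj), hf j (hi.trans hij) hj]
  unfold lam3 at *
  split_ifs <;> linarith
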